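/- arXiv:2508.19832 — 3 statements merged into one kernel-verified Lean document; each statement's English description precedes it below -/
import Mathlib

section
/- For nonzero vectors u, v in a real inner product space, dist(u, v) := dist(span{u}, span{v}) equals the sine of the angle between u and v, i.e., dist(u,v)² = 1 − ⟨u,v⟩²/(||u||²·||v||²). -/
/-- Distance from subspace `X` to subspace `Y`: supremum over unit vectors of `X` of the
distance to `Y`. -/
noncomputable def distSub {H : Type*} [NormedAddCommGroup H] [InnerProductSpace ℝ H]
    (X Y : Submodule ℝ H) : ℝ :=
  ⨆ u : {u : H // u ∈ X ∧ ‖u‖ = 1}, ⨅ v : Y, ‖u.1 - (v : H)‖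

/-!
The distance from `x` to the line `ℝ ∙ v` is attained at the orthogonal projection of `x`, and
its square expands to `‖x‖² - ⟪x, v⟫² / ‖v‖²`. This expression is homogeneous of degree
two in `x`, so on the unit vectors `x` of `ℝ ∙ u` it takes the single value
`1 - ⟪u, v⟫² / (‖u‖² ‖v‖²)`, and the supremum defining the distance of the two lines is that value.
-/

section
variable {H : Type*} [NormedAddCommGroup H] [InnerProductSpace ℝ H]

theorem iInf_norm_sub_span_singleton_sq (x v : H) :
    (⨅ y : Submodule.span ℝ {v}, ‖x - (y : H)‖) ^ 2 = ‖x‖ ^ 2 - inner ℝ x v ^ 2 / ‖v‖ ^ 2 := by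
  rw [← Submodule.starProjection_minimal, Submodule.starProjection_singleton,
    norm_sub_sq_real, real_inner_smul_right, norm_smul, real_inner_comm v x]
  rcases eq_or_ne v 0 with rfl | hv
  · simp
  · have : ‖v‖ ≠ 0 := norm_ne_zero_iff.mpr hv
    simp only [RCLike.ofReal_real_eq_id, id, Real.norm_eq_abs, mul_pow, sq_abs]
    field_simp
    ring

theorem real_inner_sq_mul_norm_sq_of_mem_span_singleton {x u : H}
    (hx : x ∈ Submodule.span ℝ {u}) (v : H) :
    inner ℝ x v ^ 2 * ‖u‖ ^ 2 = ‖x‖ ^ 2 * inner ℝ u v ^ 2 := by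
  obtain ⟨c, rfl⟩ := Submodule.mem_span_singleton.mp hx
  rw [real_inner_smul_left, norm_smul, Real.norm_eq_abs, mul_pow, mul_pow, sq_abs]
  ring

theorem distSub_sq_eq_of_forall_iInf_sq_eq {X Y : Submodule ℝ H} {a : ℝ}
    (hX : ∃ x ∈ X, ‖x‖ = 1)
    (h : ∀ x ∈ X, ‖x‖ = 1 → (⨅ y : Y, ‖x - (y : H)‖) ^ 2 = a) :
    distSub X Y ^ 2 = a := by
  obtain ⟨x₀, hx₀, hx₀1⟩ := hX
  have hsqrt : ∀ x ∈ X, ‖x‖ = 1 → ⨅ y : Y, ‖x - (y : H)‖ = √a := fun x hx hx1 => by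
    rw [← h x hx hx1, Real.sqrt_sq (Real.iInf_nonneg fun _ => norm_nonneg _)]
  have : Nonempty {x : H // x ∈ X ∧ ‖x‖ = 1} := ⟨⟨x₀, hx₀, hx₀1⟩⟩
  rw [distSub, iSup_congr fun x : {x : H // x ∈ X ∧ ‖x‖ = 1} => hsqrt x.1 x.2.1 x.2.2,
    ciSup_const, Real.sq_sqrt (h x₀ hx₀ hx₀1 ▸ sq_nonneg _)]

end

theorem stmt3_general {H : Type*} [NormedAddCommGroup H] [InnerProductSpace ℝ H]
    (u v : H) (hu : u ≠ 0) :
    distSub (Submodule.span ℝ {u}) (Submodule.span ℝ {v}) ^ 2 =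
      1 - (inner ℝ u v : ℝ) ^ 2 / (‖u‖ ^ 2 * ‖v‖ ^ 2) := by
  have hu' : ‖u‖ ≠ 0 := norm_ne_zero_iff.mpr hu
  refine distSub_sq_eq_of_forall_iInf_sq_eq
    ⟨‖u‖⁻¹ • u, Submodule.smul_mem _ _ (Submodule.mem_span_singleton_self u),
      norm_smul_inv_norm hu⟩ fun x hx hx1 => ?_
  have hxv := real_inner_sq_mul_norm_sq_of_mem_span_singleton hx v
  rw [hx1, one_pow, one_mul] at hxv
  rw [iInf_norm_sub_span_singleton_sq, hx1, one_pow, ← hxv]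
  field_simp

theorem stmt3 {H : Type*} [NormedAddCommGroup H] [InnerProductSpace ℝ H]
    (u v : H) (hu : u ≠ 0) (hv : v ≠ 0) :
    distSub (Submodule.span ℝ {u}) (Submodule.span ℝ {v}) ^ 2 =
      1 - (inner ℝ u v : ℝ) ^ 2 / (‖u‖ ^ 2 * ‖v‖ ^ 2) :=
  stmt3_general u v hu
end

section
/- Let X, Y be subspaces of a real inner product space with dim X = dim Y = n < ∞ and dist_a(X, Y) < 1. Then for any a-orthonormal basis {x_j}_{j=1}^n of X there exists an a-orthonormal basis {y_j}_{j=1}^n of Y such that dist_a(x_j, y_j) ≤ (1 + √n)·sqrt(2 − 2·sqrt(1 − dist_a(X,Y)²)) for every j. -/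
noncomputable def distVecVec {H : Type*} [NormedAddCommGroup H] [InnerProductSpace ℝ H]
    (u v : H) : ℝ :=
  distSub (Submodule.span ℝ {u}) (Submodule.span ℝ {v})

open scoped RealInnerProductSpace

theorem LinearMap.exists_linearIsometry_norm_sub_le
    {E F : Type*} [NormedAddCommGroup E] [InnerProductSpace ℝ E] [FiniteDimensional ℝ E]
    [NormedAddCommGroup F] [InnerProductSpace ℝ F] [FiniteDimensional ℝ F]
    (T : E →ₗ[ℝ] F) {δ : ℝ} (hδ : δ < 1) (hT : ∀ v, |‖T v‖ - ‖v‖| ≤ δ * ‖v‖) :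
    ∃ U : E →ₗᵢ[ℝ] F, ∀ v, ‖T v - U v‖ ≤ δ * ‖v‖ := by
  set e := (isSymmetric_adjoint_comp_self T).eigenvectorBasis rfl
  have horth : ∀ i k, i ≠ k → ⟪T (e i), T (e k)⟫ = 0 := by
    intro i k hik
    rw [← adjoint_inner_right, ← comp_apply, IsSymmetric.apply_eigenvectorBasis, inner_smul_right,
      e.orthonormal.2 hik, mul_zero]
  set μ : Fin (Module.finrank ℝ E) → ℝ := fun i => ‖T (e i)‖
  have hμ : ∀ i, |μ i - 1| ≤ δ := fun i => by simpa [e.orthonormal.1 i] using hT (e i)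
  have hμpos : ∀ i, 0 < μ i := fun i => by linarith [(abs_le.1 (hμ i)).1]
  set q := fun i => (μ i)⁻¹ • T (e i)
  have hTe : ∀ i, T (e i) = μ i • q i := fun i => (smul_inv_smul₀ (hμpos i).ne' _).symm
  have hq : Orthonormal ℝ q := by
    refine ⟨fun i => ?_, fun i k hik => ?_⟩
    · rw [norm_smul, norm_inv, Real.norm_of_nonneg (hμpos i).le]
      exact inv_mul_cancel₀ (hμpos i).ne'
    · simp only [q, inner_smul_left, inner_smul_right, horth i k hik, mul_zero]
  have hconstr : (e.toBasis.constr ℝ q) ∘ e.toBasis = q := funext (e.toBasis.constr_basis ℝ q)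
  let U := (e.toBasis.constr ℝ q).isometryOfOrthonormal (v := e.toBasis)
    (by simp [e.orthonormal]) (by rwa [hconstr])
  have hUe : ∀ i, U (e i) = q i := fun i => congrFun hconstr i
  refine ⟨U, fun v => ?_⟩
  rcases eq_or_ne v 0 with rfl | hv
  · simp
  have hδ0 : 0 ≤ δ := nonneg_of_mul_nonneg_left ((abs_nonneg _).trans (hT v)) (norm_pos_iff.2 hv)
  have hdiff : T v - U v = ∑ i, (⟪e i, v⟫ * (μ i - 1)) • q i := by
    conv_lhs => rw [← e.sum_repr' v]
    simp only [map_sum, map_smul, hTe, hUe, ← Finset.sum_sub_distrib, smul_smul, mul_sub, mul_one,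
      sub_smul]
  have hsq : ‖T v - U v‖ ^ 2 ≤ (δ * ‖v‖) ^ 2 := by
    rw [hdiff, ← real_inner_self_eq_norm_sq, hq.inner_sum, mul_pow, ← e.sum_sq_inner_right v,
      Finset.mul_sum]
    refine Finset.sum_le_sum fun i _ => ?_
    have hμsq : (μ i - 1) ^ 2 ≤ δ ^ 2 := by simpa using pow_le_pow_left₀ (abs_nonneg _) (hμ i) 2
    simp only [conj_trivial]
    nlinarith [sq_nonneg ⟪e i, v⟫]
  exact (pow_le_pow_iff_left₀ (norm_nonneg _) (by positivity) two_ne_zero).1 hsq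

theorem Submodule.span_range_eq_of_linearIndependent {K V ι : Type*} [DivisionRing K]
    [AddCommGroup V] [Module K V] [Fintype ι] {Y : Submodule K V} [FiniteDimensional K Y]
    {y : ι → V} (hy : LinearIndependent K y) (hyY : ∀ j, y j ∈ Y)
    (hcard : Module.finrank K Y = Fintype.card ι) : span K (Set.range y) = Y := by
  refine eq_of_le_of_finrank_le (span_le.2 ?_) ?_
  · rintro _ ⟨j, rfl⟩
    exact hyY j
  · rw [finrank_span_eq_card hy, hcard]

section

variable {H : Type*} [NormedAddCommGroup H] [InnerProductSpace ℝ H]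

theorem distSub_nonneg (X Y : Submodule ℝ H) : 0 ≤ distSub X Y :=
  Real.iSup_nonneg fun _ => Real.iInf_nonneg fun _ => norm_nonneg _

theorem norm_sub_starProjection_le_distSub_mul {X Y : Submodule ℝ H} [Y.HasOrthogonalProjection]
    {v : H} (hv : v ∈ X) : ‖v - Y.starProjection v‖ ≤ distSub X Y * ‖v‖ := by
  rcases eq_or_ne v 0 with rfl | hv0
  · simp
  set u := ‖v‖⁻¹ • v
  have hu : u ∈ X ∧ ‖u‖ = 1 := ⟨X.smul_mem _ hv, norm_smul_inv_norm hv0⟩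
  have hbdd : BddAbove (Set.range fun w : {w : H // w ∈ X ∧ ‖w‖ = 1} => ⨅ z : Y, ‖w.1 - z‖) := by
    refine ⟨1, ?_⟩
    rintro _ ⟨⟨w, -, hw⟩, rfl⟩
    refine (ciInf_le ⟨0, ?_⟩ (0 : Y)).trans (by simp [hw])
    rintro _ ⟨z, rfl⟩
    exact norm_nonneg _
  have hu_le : ‖u - Y.starProjection u‖ ≤ distSub X Y := by
    rw [Submodule.starProjection_minimal]
    exact le_ciSup hbdd ⟨u, hu⟩
  have hscale : v - Y.starProjection v = ‖v‖ • (u - Y.starProjection u) := by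
    rw [map_smul, ← smul_sub, smul_inv_smul₀ (norm_ne_zero_iff.2 hv0)]
  rw [hscale, norm_smul, norm_norm, mul_comm]
  exact mul_le_mul_of_nonneg_right hu_le (norm_nonneg _)

theorem abs_norm_starProjection_sub_norm_le (K : Submodule ℝ H) [K.HasOrthogonalProjection]
    {r : ℝ} {v : H} (hv : ‖v - K.starProjection v‖ ≤ r * ‖v‖) :
    |‖K.starProjection v‖ - ‖v‖| ≤ (1 - √(1 - r ^ 2)) * ‖v‖ := by
  have hle : ‖K.starProjection v‖ ≤ ‖v‖ := K.norm_starProjection_apply_le v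
  have hpyth : ‖v‖ ^ 2 = ‖K.starProjection v‖ ^ 2 + ‖v - K.starProjection v‖ ^ 2 := by
    simpa using K.norm_sq_eq_add_norm_sq_starProjection v
  have hsq : (1 - r ^ 2) * ‖v‖ ^ 2 ≤ ‖K.starProjection v‖ ^ 2 := by
    nlinarith [pow_le_pow_left₀ (norm_nonneg _) hv 2]
  have hlower : √(1 - r ^ 2) * ‖v‖ ≤ ‖K.starProjection v‖ := by
    rw [← Real.sqrt_sq (norm_nonneg v), ← Real.sqrt_mul' _ (sq_nonneg _),
      ← Real.sqrt_sq (norm_nonneg (K.starProjection v))]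
    exact Real.sqrt_le_sqrt hsq
  rw [abs_of_nonpos (sub_nonpos.2 hle)]
  linarith

theorem distVecVec_le_norm_sub {a : H} (b : H) (ha : ‖a‖ = 1) : distVecVec a b ≤ ‖a - b‖ := by
  refine Real.iSup_le (fun ⟨u, hu, hu1⟩ => ?_) (norm_nonneg _)
  obtain ⟨c, rfl⟩ := Submodule.mem_span_singleton.mp hu
  have hc : ‖c‖ = 1 := by rwa [norm_smul, ha, mul_one] at hu1
  have hbdd : BddBelow (Set.range fun z : Submodule.span ℝ {b} => ‖c • a - z‖) :=
    ⟨0, by rintro _ ⟨z, rfl⟩; exact norm_nonneg _⟩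
  calc ⨅ z : Submodule.span ℝ {b}, ‖c • a - z‖
      ≤ ‖c • a - c • b‖ :=
        ciInf_le hbdd ⟨c • b, Submodule.smul_mem _ _ (Submodule.mem_span_singleton_self b)⟩
    _ = ‖a - b‖ := by rw [← smul_sub, norm_smul, hc, one_mul]

end

theorem add_one_sub_sqrt_one_sub_sq_le {d : ℝ} (hd0 : 0 ≤ d) (hd1 : d ≤ 1) :
    d + (1 - √(1 - d ^ 2)) ≤ 2 * √(2 - 2 * √(1 - d ^ 2)) := by
  set s := √(1 - d ^ 2)
  have hs0 : 0 ≤ s := Real.sqrt_nonneg _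
  have hs2 : s ^ 2 = 1 - d ^ 2 := Real.sq_sqrt (by nlinarith)
  have hs1 : s ≤ 1 := by nlinarith
  have hd : d ≤ √(2 - 2 * s) := Real.le_sqrt_of_sq_le (by nlinarith)
  have hs : 1 - s ≤ √(2 - 2 * s) := Real.le_sqrt_of_sq_le (by nlinarith)
  linarith

theorem stmt4_general {H : Type*} [NormedAddCommGroup H] [InnerProductSpace ℝ H]
    (n : ℕ) (X Y : Submodule ℝ H)
    [FiniteDimensional ℝ X] [FiniteDimensional ℝ Y]
    (hdY : Module.finrank ℝ Y = n)
    (hdist : distSub X Y < 1)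
    (x : Fin n → H) (hxon : Orthonormal ℝ x) (hxspan : Submodule.span ℝ (Set.range x) = X) :
    ∃ y : Fin n → H, Orthonormal ℝ y ∧ Submodule.span ℝ (Set.range y) = Y ∧
      ∀ j, distVecVec (x j) (y j) ≤
        (1 + Real.sqrt n) * Real.sqrt (2 - 2 * Real.sqrt (1 - distSub X Y ^ 2)) := by
  set d := distSub X Y
  have hd0 : 0 ≤ d := distSub_nonneg X Y
  have hxX : ∀ j, x j ∈ X := fun j => hxspan ▸ Submodule.subset_span ⟨j, rfl⟩
  let x' : Fin n → X := fun j => ⟨x j, hxX j⟩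
  have hx'on : Orthonormal ℝ x' := by
    simpa [orthonormal_iff_ite, x'] using orthonormal_iff_ite.1 hxon
  let T : X →ₗ[ℝ] Y := Y.orthogonalProjectionOnto.toLinearMap ∘ₗ X.subtype
  have hT : ∀ v, |‖T v‖ - ‖v‖| ≤ (1 - √(1 - d ^ 2)) * ‖v‖ := fun v =>
    abs_norm_starProjection_sub_norm_le Y (norm_sub_starProjection_le_distSub_mul v.2)
  have hδ : 1 - √(1 - d ^ 2) < 1 := by
    linarith [Real.sqrt_pos.2 (by nlinarith : 0 < 1 - d ^ 2)]
  obtain ⟨U, hU⟩ := T.exists_linearIsometry_norm_sub_le hδ hT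
  let y : Fin n → H := fun j => U (x' j)
  have hyon : Orthonormal ℝ y := hx'on.comp_linearIsometry (Y.subtypeₗᵢ.comp U)
  refine ⟨y, hyon, Submodule.span_range_eq_of_linearIndependent hyon.linearIndependent
    (fun j => (U (x' j)).2) (by simp [hdY]), fun j => ?_⟩
  have hn : 1 ≤ √(n : ℝ) := Real.one_le_sqrt.2 (by exact_mod_cast j.pos)
  calc distVecVec (x j) (y j) ≤ ‖x j - y j‖ := distVecVec_le_norm_sub _ (hxon.1 j)
    _ ≤ ‖x j - Y.starProjection (x j)‖ + ‖Y.starProjection (x j) - y j‖ :=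
        norm_sub_le_norm_sub_add_norm_sub _ _ _
    _ ≤ d + (1 - √(1 - d ^ 2)) := by
        gcongr
        · simpa [hxon.1 j] using norm_sub_starProjection_le_distSub_mul (Y := Y) (hxX j)
        · simpa [T, x', y, hxon.1 j] using hU (x' j)
    _ ≤ 2 * √(2 - 2 * √(1 - d ^ 2)) := add_one_sub_sqrt_one_sub_sq_le hd0 hdist.le
    _ ≤ (1 + √n) * √(2 - 2 * √(1 - d ^ 2)) := by gcongr; linarith

theorem stmt4 {H : Type*} [NormedAddCommGroup H] [InnerProductSpace ℝ H]
    (n : ℕ) (X Y : Submodule ℝ H)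
    [FiniteDimensional ℝ X] [FiniteDimensional ℝ Y]
    (hdX : Module.finrank ℝ X = n) (hdY : Module.finrank ℝ Y = n)
    (hdist : distSub X Y < 1)
    (x : Fin n → H) (hxon : Orthonormal ℝ x) (hxspan : Submodule.span ℝ (Set.range x) = X) :
    ∃ y : Fin n → H, Orthonormal ℝ y ∧ Submodule.span ℝ (Set.range y) = Y ∧
      ∀ j, distVecVec (x j) (y j) ≤
        (1 + Real.sqrt n) * Real.sqrt (2 - 2 * Real.sqrt (1 - distSub X Y ^ 2)) :=
  stmt4_general n X Y hdY hdist x hxon hxspan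
end

section
/- Let H be a real inner product space with inner product a, let M ⊆ H be a finite-dimensional subspace, E : H → M an a-orthogonal projection onto a subspace containing M's approximation, and P an a-orthogonal projection onto another subspace M̃. Then for any u with ||u||_a ≤ L, ||E u − P(E u)||_a ≤ dist_a(span{Eu}, M̃)·||Eu||_a ≤ L·dist_a(M_E, M̃), where M_E is any subspace containing Eu. In particular, ||(I − P)Eu||_a² ≤ ||u||_a² · dist_a(M_E, M̃)². -/
/-!
The a-distance of `x ∈ X` to `Y` is attained by the projection residual `x - P x`, which is
homogeneous in `x`; on the unit vector `x / ‖x‖` it is bounded by the supremum `distSub X Y`.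
-/

namespace distSub

variable {H : Type*} [NormedAddCommGroup H] [InnerProductSpace ℝ H] {X Y : Submodule ℝ H}

lemma nonneg : 0 ≤ distSub X Y :=
  Real.iSup_nonneg fun _ => Real.iInf_nonneg fun _ => norm_nonneg _

lemma iInf_norm_sub_le_norm (w : H) : ⨅ v : Y, ‖w - (v : H)‖ ≤ ‖w‖ := by
  simpa using ciInf_le (f := fun v : Y => ‖w - (v : H)‖)
    ⟨0, by rintro _ ⟨v, rfl⟩; exact norm_nonneg _⟩ 0

lemma bddAbove_range :
    BddAbove (Set.range fun u : {u : H // u ∈ X ∧ ‖u‖ = 1} => ⨅ v : Y, ‖u.1 - (v : H)‖) :=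
  ⟨1, by rintro _ ⟨u, rfl⟩; simpa [u.2.2] using iInf_norm_sub_le_norm (Y := Y) u.1⟩

lemma iInf_norm_sub_le {w : H} (hw : w ∈ X) (hw1 : ‖w‖ = 1) :
    ⨅ v : Y, ‖w - (v : H)‖ ≤ distSub X Y :=
  le_ciSup (f := fun u : {u : H // u ∈ X ∧ ‖u‖ = 1} => ⨅ v : Y, ‖u.1 - (v : H)‖)
    bddAbove_range ⟨w, hw, hw1⟩

lemma mono {X' : Submodule ℝ H} (hX : X ≤ X') : distSub X Y ≤ distSub X' Y :=
  Real.iSup_le (fun u => iInf_norm_sub_le (hX u.2.1) u.2.2) nonneg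

lemma norm_sub_starProjection_le_mul_norm [Y.HasOrthogonalProjection] {x : H} (hx : x ∈ X) :
    ‖x - Y.starProjection x‖ ≤ distSub X Y * ‖x‖ := by
  rcases eq_or_ne x 0 with rfl | hx0
  · simp
  have hxpos : 0 < ‖x‖ := norm_pos_iff.mpr hx0
  set w := ‖x‖⁻¹ • x
  have hw_residual : ‖w - Y.starProjection w‖ = ‖x‖⁻¹ * ‖x - Y.starProjection x‖ := by
    rw [map_smul, ← smul_sub, norm_smul, norm_inv, norm_norm]
  have hw_le : ‖w - Y.starProjection w‖ ≤ distSub X Y := by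
    rw [Submodule.starProjection_minimal]
    exact iInf_norm_sub_le (X.smul_mem _ hx) (norm_smul_inv_norm hx0)
  rw [hw_residual, inv_mul_le_iff₀ hxpos] at hw_le
  linarith

end distSub

theorem stmt15 {H : Type*} [NormedAddCommGroup H] [InnerProductSpace ℝ H]
    (Mt : Submodule ℝ H) [CompleteSpace Mt]
    (E : H →ₗ[ℝ] H) (hE : ∀ w, ‖E w‖ ≤ ‖w‖)
    (ME : Submodule ℝ H) (u : H) (hEu : E u ∈ ME)
    (L : ℝ) (hL : ‖u‖ ≤ L) :
    ‖E u - (Mt.orthogonalProjection (E u) : H)‖ ≤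
        distSub (Submodule.span ℝ {E u}) Mt * ‖E u‖ ∧
    distSub (Submodule.span ℝ {E u}) Mt * ‖E u‖ ≤ L * distSub ME Mt ∧
    ‖E u - (Mt.orthogonalProjection (E u) : H)‖ ^ 2 ≤ ‖u‖ ^ 2 * distSub ME Mt ^ 2 := by
  simp only [← Submodule.starProjection_apply]
  have hspan : distSub (Submodule.span ℝ {E u}) Mt ≤ distSub ME Mt :=
    distSub.mono (Submodule.span_singleton_le_iff_mem _ _ |>.mpr hEu)
  have hME : ‖E u - Mt.starProjection (E u)‖ ≤ distSub ME Mt * ‖u‖ :=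
    (distSub.norm_sub_starProjection_le_mul_norm hEu).trans
      (mul_le_mul_of_nonneg_left (hE u) distSub.nonneg)
  refine ⟨distSub.norm_sub_starProjection_le_mul_norm (Submodule.mem_span_singleton_self _),
    ?_, ?_⟩
  · rw [mul_comm L]
    exact mul_le_mul hspan ((hE u).trans hL) (norm_nonneg _) distSub.nonneg
  · calc ‖E u - Mt.starProjection (E u)‖ ^ 2 ≤ (distSub ME Mt * ‖u‖) ^ 2 :=
          pow_le_pow_left₀ (norm_nonneg _) hME 2
      _ = ‖u‖ ^ 2 * distSub ME Mt ^ 2 := by ring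
end
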